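/- Fix β ∈ [1/2, 1). Then for any T ≥ 1 and any N ≥ 1 and any sequence of binary losses l_{t,i} ∈ {0,1}, the cumulative expected loss of the Randomized Weighted-Majority algorithm satisfies 𝓛_T ≤ (log N)/(1 − β) + (2 − β)·𝓛_T^min. -/

import Mathlib

/-!
With binary losses the update `w ↦ β w` on a loss reads `w ↦ w (1 - (1 - β) l)`, so the total
weight evolves as `W_{t+1} = W_t (1 - (1 - β) L_t) ≤ W_t exp (-(1 - β) L_t)`, giving
`log W_T ≤ log N - (1 - β) 𝓛_T`. On the other hand `W_T ≥ w_{T,i} = β ^ 𝓛_{T,i}` for every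
expert `i`. Comparing the two bounds and using `-log β ≤ (1 - β)(2 - β)` for `β ∈ [1/2, 1]`
gives the claim.
-/

open Finset Real

/-- Weight of expert `i` in the Randomized Weighted-Majority algorithm.
Rounds are indexed starting from `0`, so `rwmWeight β l i t` is the weight
`w_{t+1, i}` of the paper: the initial weight (`t = 0`) is `1`, and the weight is
multiplied by `β` each time the expert incurs a loss of `1`. -/
noncomputable def rwmWeight (β : ℝ) (l : ℕ → ℕ → ℝ) (i : ℕ) : ℕ → ℝ
  | 0 => 1
  | t + 1 => if l t i = 1 then β * rwmWeight β l i t else rwmWeight β l i t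

/-- Total weight `W_{t+1} = ∑_{i=1}^N w_{t+1, i}`. -/
noncomputable def rwmTotalWeight (β : ℝ) (l : ℕ → ℕ → ℝ) (N t : ℕ) : ℝ :=
  ∑ i ∈ Finset.range N, rwmWeight β l i t

/-- Expected loss of the RWM algorithm at round `t`:
`L_t = ∑_{i=1}^N p_{t,i} l_{t,i}` with `p_{t,i} = w_{t,i} / W_t`. -/
noncomputable def rwmRoundLoss (β : ℝ) (l : ℕ → ℕ → ℝ) (N t : ℕ) : ℝ :=
  ∑ i ∈ Finset.range N, (rwmWeight β l i t / rwmTotalWeight β l N t) * l t i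

/-- Cumulative expected loss `𝓛_T = ∑_{t=1}^T L_t` of the RWM algorithm. -/
noncomputable def rwmCumLoss (β : ℝ) (l : ℕ → ℕ → ℝ) (N T : ℕ) : ℝ :=
  ∑ t ∈ Finset.range T, rwmRoundLoss β l N t

/-- Cumulative loss `𝓛_{T,i} = ∑_{t=1}^T l_{t,i}` of expert `i`. -/
noncomputable def rwmExpertLoss (l : ℕ → ℕ → ℝ) (i T : ℕ) : ℝ :=
  ∑ t ∈ Finset.range T, l t i

lemma neg_log_le_one_sub_mul_two_sub {β : ℝ} (hβ₁ : 1 / 2 ≤ β) (hβ₂ : β ≤ 1) :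
    -log β ≤ (1 - β) * (2 - β) := by
  let g : ℝ → ℝ := fun b => (1 - b) * (2 - b) + log b
  have hderiv : ∀ b ≠ 0, HasDerivAt g ((2 * b - 1) * (b - 1) / b) b := fun b hb =>
    ((((hasDerivAt_id b).const_sub 1).fun_mul ((hasDerivAt_id b).const_sub 2)).add
      (hasDerivAt_log hb)).congr_deriv (by field_simp; simp; ring)
  have hne : ∀ b ∈ Set.Icc (1 / 2 : ℝ) 1, b ≠ 0 := fun b hb => by linarith [hb.1]
  have hanti : AntitoneOn g (Set.Icc (1 / 2) 1) := by
    refine antitoneOn_of_deriv_nonpos (convex_Icc _ _)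
      (fun b hb => (hderiv b (hne b hb)).continuousAt.continuousWithinAt)
      (fun b hb => (hderiv b (hne b (interior_subset hb))).differentiableAt.differentiableWithinAt)
      fun b hb => ?_
    rw [interior_Icc] at hb
    rw [(hderiv b (hne b (Set.Ioo_subset_Icc_self hb))).deriv]
    exact div_nonpos_of_nonpos_of_nonneg
      (mul_nonpos_of_nonneg_of_nonpos (by linarith [hb.1]) (by linarith [hb.2])) (by linarith [hb.1])
  have hg := hanti ⟨hβ₁, hβ₂⟩ ⟨by norm_num, le_rfl⟩ hβ₂
  simp only [g, sub_self, zero_mul, log_one, add_zero] at hg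
  linarith

section Weights

variable {β : ℝ} {l : ℕ → ℕ → ℝ}

lemma rwmWeight_pos (hβ : 0 < β) (i t : ℕ) : 0 < rwmWeight β l i t := by
  induction t with
  | zero => simp [rwmWeight]
  | succ t ih =>
    rw [rwmWeight]
    split
    · exact mul_pos hβ ih
    · exact ih

lemma rwmWeight_succ_of_binary {i t : ℕ} (hl : l t i = 0 ∨ l t i = 1) :
    rwmWeight β l i (t + 1) = rwmWeight β l i t * (1 - (1 - β) * l t i) := by
  rcases hl with h | h <;> simp [rwmWeight, h, mul_comm]

lemma log_rwmWeight_of_binary (hβ : 0 < β) {i T : ℕ} (hl : ∀ t < T, l t i = 0 ∨ l t i = 1) :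
    log (rwmWeight β l i T) = rwmExpertLoss l i T * log β := by
  induction T with
  | zero => simp [rwmWeight, rwmExpertLoss]
  | succ T ih =>
    rw [rwmExpertLoss, sum_range_succ, ← rwmExpertLoss, add_mul,
      ← ih fun t ht => hl t (by omega)]
    rcases hl T (by omega) with h | h
    · simp [rwmWeight, h]
    · rw [rwmWeight, if_pos h, h, log_mul hβ.ne' (rwmWeight_pos hβ i T).ne', one_mul, add_comm]

lemma rwmExpertLoss_nonneg_of_binary {i T : ℕ} (hl : ∀ t < T, l t i = 0 ∨ l t i = 1) :
    0 ≤ rwmExpertLoss l i T :=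
  sum_nonneg fun t ht => by rcases hl t (mem_range.mp ht) with h | h <;> simp [h]

variable {N : ℕ}

lemma rwmTotalWeight_pos (hβ : 0 < β) (hN : 1 ≤ N) (t : ℕ) : 0 < rwmTotalWeight β l N t :=
  sum_pos (fun i _ => rwmWeight_pos hβ i t) (nonempty_range_iff.mpr (by omega))

lemma rwmTotalWeight_mul_rwmRoundLoss (hβ : 0 < β) (hN : 1 ≤ N) (t : ℕ) :
    rwmTotalWeight β l N t * rwmRoundLoss β l N t =
      ∑ i ∈ range N, rwmWeight β l i t * l t i := by
  have hW := (rwmTotalWeight_pos (l := l) hβ hN t).ne'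
  rw [rwmRoundLoss, mul_sum]
  exact sum_congr rfl fun i _ => by field_simp

lemma rwmTotalWeight_succ_of_binary (hβ : 0 < β) (hN : 1 ≤ N) {t : ℕ}
    (hl : ∀ i < N, l t i = 0 ∨ l t i = 1) :
    rwmTotalWeight β l N (t + 1) =
      rwmTotalWeight β l N t * (1 - (1 - β) * rwmRoundLoss β l N t) := by
  calc rwmTotalWeight β l N (t + 1)
      = ∑ i ∈ range N, (rwmWeight β l i t - (1 - β) * (rwmWeight β l i t * l t i)) :=
        sum_congr rfl fun i hi => by
          rw [rwmWeight_succ_of_binary (hl i (mem_range.mp hi))]; ring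
    _ = rwmTotalWeight β l N t - (1 - β) * (rwmTotalWeight β l N t * rwmRoundLoss β l N t) := by
        rw [sum_sub_distrib, ← mul_sum, rwmTotalWeight_mul_rwmRoundLoss hβ hN]; rfl
    _ = rwmTotalWeight β l N t * (1 - (1 - β) * rwmRoundLoss β l N t) := by ring

lemma log_rwmTotalWeight_succ_le (hβ : 0 < β) (hN : 1 ≤ N) {t : ℕ}
    (hl : ∀ i < N, l t i = 0 ∨ l t i = 1) :
    log (rwmTotalWeight β l N (t + 1)) ≤
      log (rwmTotalWeight β l N t) - (1 - β) * rwmRoundLoss β l N t := by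
  have hW := rwmTotalWeight_pos (l := l) hβ hN t
  have hrec := rwmTotalWeight_succ_of_binary hβ hN hl
  have hfactor : 0 < 1 - (1 - β) * rwmRoundLoss β l N t :=
    pos_of_mul_pos_right (hrec ▸ rwmTotalWeight_pos hβ hN (t + 1)) hW.le
  rw [hrec, log_mul hW.ne' hfactor.ne']
  linarith [log_le_sub_one_of_pos hfactor]

lemma log_rwmTotalWeight_le (hβ : 0 < β) (hN : 1 ≤ N) {T : ℕ}
    (hl : ∀ t < T, ∀ i < N, l t i = 0 ∨ l t i = 1) :
    log (rwmTotalWeight β l N T) ≤ log N - (1 - β) * rwmCumLoss β l N T := by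
  induction T with
  | zero => simp [rwmTotalWeight, rwmWeight, rwmCumLoss]
  | succ T ih =>
    have hstep := log_rwmTotalWeight_succ_le hβ hN (hl T (by omega))
    have hprev := ih fun t ht => hl t (by omega)
    rw [rwmCumLoss, sum_range_succ, ← rwmCumLoss]
    linarith

lemma one_sub_mul_rwmCumLoss_le (hβ : 0 < β) (hN : 1 ≤ N) {T : ℕ}
    (hl : ∀ t < T, ∀ i < N, l t i = 0 ∨ l t i = 1) {i : ℕ} (hi : i < N) :
    (1 - β) * rwmCumLoss β l N T ≤ log N - rwmExpertLoss l i T * log β := by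
  have hexpert : rwmExpertLoss l i T * log β ≤ log (rwmTotalWeight β l N T) := by
    rw [← log_rwmWeight_of_binary hβ fun t ht => hl t ht i hi]
    exact log_le_log (rwmWeight_pos hβ i T)
      (single_le_sum (fun j _ => (rwmWeight_pos hβ j T).le) (mem_range.mpr hi))
  linarith [log_rwmTotalWeight_le hβ hN hl]

end Weights

/-- for `β ∈ [1/2, 1)`, `T ≥ 1`, `N ≥ 1` and binary losses,
`𝓛_T ≤ (log N)/(1 − β) + (2 − β)·𝓛_T^min`. -/
theorem rwm_first_loss_bound (β : ℝ) (hβ₁ : 1 / 2 ≤ β) (hβ₂ : β < 1)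
    (T N : ℕ) (hN : 1 ≤ N) (l : ℕ → ℕ → ℝ)
    (hl : ∀ t < T, ∀ i < N, l t i = 0 ∨ l t i = 1) :
    rwmCumLoss β l N T ≤
      Real.log N / (1 - β) +
        (2 - β) * (Finset.range N).inf'
          (Finset.nonempty_range_iff.mpr (by omega)) (fun i => rwmExpertLoss l i T) := by
  obtain ⟨i, hi, hmin⟩ :=
    exists_mem_eq_inf' (nonempty_range_iff.mpr (show N ≠ 0 by omega)) fun i => rwmExpertLoss l i T
  rw [hmin]
  replace hi : i < N := mem_range.mp hi
  have h1β : 0 < 1 - β := by linarith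
  refine le_of_mul_le_mul_left ?_ h1β
  calc (1 - β) * rwmCumLoss β l N T ≤ log N + rwmExpertLoss l i T * -log β := by
        linarith [one_sub_mul_rwmCumLoss_le (β := β) (by linarith) hN hl hi]
    _ ≤ log N + rwmExpertLoss l i T * ((1 - β) * (2 - β)) := by
        gcongr
        · exact rwmExpertLoss_nonneg_of_binary fun t ht => hl t ht i hi
        · exact neg_log_le_one_sub_mul_two_sub hβ₁ hβ₂.le
    _ = (1 - β) * (log N / (1 - β) + (2 - β) * rwmExpertLoss l i T) := by
        field_simp
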